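/- Let S and V be finite subsets of ℤⁿ, regarded inside Euclidean space ℝⁿ, and set Δ := convexHull ℝ S. Suppose 0 lies in the interior of Δ and the polar dual Δ° := {v ∈ ℝⁿ : ⟨m, v⟩ ≥ -1 for all m ∈ Δ} equals convexHull ℝ V. Then the only lattice point of ℤⁿ in the interior of Δ is 0. -/

import Mathlib

/-- The polar dual of a set in Euclidean `ℝⁿ` (with the standard inner product):
`S° = {v | ⟨m, v⟩ ≥ -1 for all m ∈ S}`. -/
def polarDual {n : ℕ} (S : Set (Fin n → ℝ)) : Set (Fin n → ℝ) :=
  {v | ∀ m ∈ S, ∑ i, m i * v i ≥ -1}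

/-- The inclusion of lattice points `ℤⁿ ⊆ ℝⁿ`. -/
def latticeCast {n : ℕ} (f : Fin n → ℤ) : Fin n → ℝ := fun i => (f i : ℝ)

/-!
If `m ≠ 0` is a lattice point in the interior of `Δ`, then `t • m ∈ Δ` for some `t > 1`, so
`⟨m, v⟩ > -1` on `Δ°`. At the lattice vertices of `Δ°` these values are integers, hence
`⟨m, ·⟩ ≥ 0` on all of `Δ° = conv V`. But `Δ` is bounded, so `-(B⁻¹ • m) ∈ Δ°` for a bound
`B > 0` of `⟨m, ·⟩` on `Δ`, where `⟨m, ·⟩` takes the negative value `-B⁻¹ ⟨m, m⟩`.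
-/

open Filter Topology

theorem exists_one_lt_smul_mem_of_mem_interior {E : Type*} [AddCommGroup E] [Module ℝ E]
    [TopologicalSpace E] [ContinuousSMul ℝ E] {s : Set E} {x : E} (hx : x ∈ interior s) :
    ∃ t : ℝ, 1 < t ∧ t • x ∈ s := by
  have hcont : Continuous fun t : ℝ => t • x := continuous_id.smul continuous_const
  have hlim : Tendsto (fun t : ℝ => t • x) (𝓝[>] 1) (𝓝 x) :=
    (hcont.tendsto' 1 x (one_smul ℝ x)).mono_left nhdsWithin_le_nhds
  exact (eventually_mem_nhdsWithin.and (hlim.eventually (mem_interior_iff_mem_nhds.mp hx))).exists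

section

variable {n : ℕ}

theorem mem_polarDual_iff {S : Set (Fin n → ℝ)} {v : Fin n → ℝ} :
    v ∈ polarDual S ↔ ∀ m ∈ S, -1 ≤ m ⬝ᵥ v :=
  Iff.rfl

theorem latticeCast_zero : latticeCast (0 : Fin n → ℤ) = 0 := by
  funext i; simp [latticeCast]

theorem latticeCast_injective : Function.Injective (latticeCast (n := n)) :=
  fun _ _ h => funext fun i => Int.cast_injective (congrFun h i)

theorem latticeCast_dotProduct (m w : Fin n → ℤ) :
    latticeCast m ⬝ᵥ latticeCast w = ((m ⬝ᵥ w : ℤ) : ℝ) :=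
  ((Int.castRingHom ℝ).map_dotProduct m w).symm

theorem neg_one_lt_dotProduct_of_mem_interior {Δ : Set (Fin n → ℝ)} {m v : Fin n → ℝ}
    (hm : m ∈ interior Δ) (hv : v ∈ polarDual Δ) : -1 < m ⬝ᵥ v := by
  obtain ⟨t, ht, htm⟩ := exists_one_lt_smul_mem_of_mem_interior hm
  have : -1 ≤ t * (m ⬝ᵥ v) := by
    simpa only [smul_dotProduct, smul_eq_mul] using mem_polarDual_iff.mp hv _ htm
  nlinarith

theorem dotProduct_nonneg_of_mem_polarDual {Δ : Set (Fin n → ℝ)} {V : Set (Fin n → ℤ)}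
    (hdual : polarDual Δ = convexHull ℝ (latticeCast '' V)) {m : Fin n → ℤ}
    (hm : latticeCast m ∈ interior Δ) {v : Fin n → ℝ} (hv : v ∈ polarDual Δ) :
    0 ≤ latticeCast m ⬝ᵥ v := by
  have hconvex : Convex ℝ {v : Fin n → ℝ | 0 ≤ latticeCast m ⬝ᵥ v} :=
    convex_halfSpace_ge (dotProductBilin ℝ ℝ (latticeCast m)).isLinear 0
  rw [hdual] at hv
  refine convexHull_min ?_ hconvex hv
  rintro _ ⟨w, hw, rfl⟩
  have hw_dual : latticeCast w ∈ polarDual Δ :=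
    hdual ▸ subset_convexHull ℝ _ ⟨w, hw, rfl⟩
  have hlt : (-1 : ℤ) < m ⬝ᵥ w := by
    exact_mod_cast latticeCast_dotProduct m w ▸ neg_one_lt_dotProduct_of_mem_interior hm hw_dual
  have hnonneg : 0 ≤ m ⬝ᵥ w := by omega
  show 0 ≤ latticeCast m ⬝ᵥ latticeCast w
  rw [latticeCast_dotProduct]
  exact_mod_cast hnonneg

theorem exists_pos_dotProduct_le_on_convexHull {s : Set (Fin n → ℝ)} (hs : s.Finite)
    (m : Fin n → ℝ) : ∃ B > 0, ∀ x ∈ convexHull ℝ s, m ⬝ᵥ x ≤ B := by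
  obtain ⟨B, hB⟩ := (hs.isCompact_convexHull (𝕜 := ℝ)).bddAbove_image
    (continuous_const.dotProduct continuous_id).continuousOn (f := (m ⬝ᵥ ·))
  exact ⟨max B 1, by positivity, fun x hx => (hB ⟨x, hx, rfl⟩).trans (le_max_left _ _)⟩

theorem neg_inv_smul_mem_polarDual {Δ : Set (Fin n → ℝ)} {m : Fin n → ℝ} {B : ℝ}
    (hB : 0 < B) (hle : ∀ x ∈ Δ, m ⬝ᵥ x ≤ B) : -(B⁻¹ • m) ∈ polarDual Δ := by
  refine mem_polarDual_iff.mpr fun x hx => ?_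
  have hscaled := mul_le_mul_of_nonneg_left (hle x hx) (inv_nonneg.mpr hB.le)
  rw [inv_mul_cancel₀ hB.ne'] at hscaled
  rw [dotProduct_neg, dotProduct_smul, dotProduct_comm, smul_eq_mul]
  linarith

end

/-- A reflexive lattice polytope (a lattice polytope containing `0` in its
interior whose polar dual is again a lattice polytope) has `0` as its only
interior lattice point. -/
theorem reflexive_unique_interior_lattice_point (n : ℕ) (S V : Finset (Fin n → ℤ))
    (Δ : Set (Fin n → ℝ))
    (hΔ : Δ = convexHull ℝ (latticeCast '' (S : Set (Fin n → ℤ))))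
    (h0 : (0 : Fin n → ℝ) ∈ interior Δ)
    (hdual : polarDual Δ = convexHull ℝ (latticeCast '' (V : Set (Fin n → ℤ)))) :
    {m : Fin n → ℤ | latticeCast m ∈ interior Δ} = {0} := by
  refine Set.eq_singleton_iff_unique_mem.mpr ⟨by simpa [latticeCast_zero] using h0, ?_⟩
  intro m (hm : latticeCast m ∈ interior Δ)
  by_contra hm0
  set M := latticeCast m
  have hM : M ≠ 0 := latticeCast_zero (n := n) ▸ latticeCast_injective.ne hm0
  have hMM : 0 < M ⬝ᵥ M :=
    (Fintype.sum_nonneg fun i => mul_self_nonneg (M i)).lt_of_ne'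
      (dotProduct_self_eq_zero.not.mpr hM)
  obtain ⟨B, hB, hle⟩ :=
    exists_pos_dotProduct_le_on_convexHull (S.finite_toSet.image latticeCast) M
  rw [← hΔ] at hle
  have hdual_nonneg :=
    dotProduct_nonneg_of_mem_polarDual hdual hm (neg_inv_smul_mem_polarDual hB hle)
  rw [dotProduct_neg, dotProduct_smul, smul_eq_mul] at hdual_nonneg
  linarith [mul_pos (inv_pos.mpr hB) hMM]
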